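/- arXiv:2207.06688 — 3 statements merged into one kernel-verified Lean document; each statement's English description precedes it below -/
import Mathlib

section
/- Two symbols Λ₁ and Λ₂ are equivalent under the shift-generated equivalence relation if and only if Υ(Λ₁) = Υ(Λ₂) and def(Λ₁) = def(Λ₂), where Υ sends a symbol to its associated bi-partition. -/
/-!
Shifting a row `A ↦ (A + 1) ∪ {0}` raises both `aᵢ` and `|A|` by one, so it leaves every entry
`aᵢ - (|A| - i)` of the full sequence unchanged and appends a trailing `0`; hence `Υ` and the
defect are shift invariants. Conversely, a row is recovered from `Υ` and its cardinality: the full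
sequence is `Υ` padded with zeros to length `|A|`, and adding back the staircase gives the sorted
row. Two symbols with equal invariants therefore differ by `|A₂| - |A₁| = |B₂| - |B₁|` shifts of
the smaller one.
-/

/-- The rank of a symbol `Λ = (A, B)`:
`rk(Λ) = Σ_{a∈A} a + Σ_{b∈B} b − ⌊((|A|+|B|−1)²)/4⌋`. -/
def srank (Λ : Finset ℕ × Finset ℕ) : ℤ :=
  (∑ a ∈ Λ.1, (a : ℤ)) + (∑ b ∈ Λ.2, (b : ℤ)) -
    ((Λ.1.card + Λ.2.card : ℤ) - 1) ^ 2 / 4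

/-- The defect of a symbol `Λ = (A, B)`: `def(Λ) = |A| − |B|`. -/
def sdefect (Λ : Finset ℕ × Finset ℕ) : ℤ :=
  (Λ.1.card : ℤ) - (Λ.2.card : ℤ)

/-- The shift of a symbol: add 1 to every entry of each row and insert 0. -/
def shiftS (Λ : Finset ℕ × Finset ℕ) : Finset ℕ × Finset ℕ :=
  (Λ.1.image (· + 1) ∪ {0}, Λ.2.image (· + 1) ∪ {0})

/-- The equivalence relation on symbols generated by the shift. -/
def sequiv : (Finset ℕ × Finset ℕ) → (Finset ℕ × Finset ℕ) → Prop :=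
  Relation.EqvGen (fun Λ Λ' => Λ' = shiftS Λ)

/-- For a β-set `A = {a₁ > a₂ > ⋯ > a_m}`, the sequence
`[a₁ − (m−1), a₂ − (m−2), …, a_m]`. -/
def upsRowFull (A : Finset ℕ) : List ℤ :=
  ((A.sort (· ≤ ·)).reverse).mapIdx fun i a => (a : ℤ) - ((A.card : ℤ) - 1 - i)

/-- The partition `Υ(A)` attached to a β-set `A`: the sequence `upsRowFull A`
with trailing zeros removed. -/
def upsRow (A : Finset ℕ) : List ℤ :=
  ((upsRowFull A).reverse.dropWhile (· == 0)).reverse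

/-- `|Υ(Λ)|`: the size of the bi-partition attached to the symbol `Λ`. -/
def upsSize (Λ : Finset ℕ × Finset ℕ) : ℤ :=
  (upsRow Λ.1).sum + (upsRow Λ.2).sum

/-- `δ(A) = a₁ − (|A| − 1)` if `A ≠ ∅` (with `a₁` the largest element), and `δ(∅) = 0`. -/
def deltaRow (A : Finset ℕ) : ℤ :=
  if h : A.Nonempty then (A.max' h : ℤ) - ((A.card : ℤ) - 1) else 0

/-- `δ(Λ) = δ(A) + δ(B)` for a symbol `Λ = (A, B)`. -/
def deltaS (Λ : Finset ℕ × Finset ℕ) : ℤ :=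
  deltaRow Λ.1 + deltaRow Λ.2

lemma Relation.EqvGen.apply_eq {α β : Type*} {r : α → α → Prop} {f : α → β}
    (hf : ∀ a b, r a b → f a = f b) {a b : α} (h : Relation.EqvGen r a b) : f a = f b :=
  congrArg (Quot.lift f hf) (Quot.eqvGen_sound h)

lemma Relation.eqvGen_self_iterate {α : Type*} (f : α → α) (a : α) (k : ℕ) :
    Relation.EqvGen (fun x y => y = f x) a (f^[k] a) := by
  induction k with
  | zero => exact .refl a
  | succ k ih => exact ih.trans _ _ _ (.rel _ _ (Function.iterate_succ_apply' f k a))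

namespace List

variable {α : Type*} [BEq α] [LawfulBEq α]

lemma rdropWhile_append_replicate (l : List α) (a : α) (k : ℕ) :
    (l ++ replicate k a).rdropWhile (· == a) = l.rdropWhile (· == a) := by
  induction k with
  | zero => simp
  | succ k ih => rw [replicate_succ', ← append_assoc, rdropWhile_concat_pos _ _ _ (by simp), ih]

lemma rdropWhile_append_replicate_eq (l : List α) (a : α) :
    l.rdropWhile (· == a) ++ replicate (l.length - (l.rdropWhile (· == a)).length) a = l := by
  have hlen := congrArg length (rdropWhile_append_rtakeWhile (p := (· == a)) (l := l))
  have htail : l.rtakeWhile (· == a) = replicate (l.rtakeWhile (· == a)).length a :=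
    eq_replicate_of_mem fun b hb => by simpa using mem_rtakeWhile_imp hb
  rw [length_append] at hlen
  conv_rhs => rw [← rdropWhile_append_rtakeWhile (p := (· == a)) (l := l), htail]
  congr 2
  omega

lemma eq_of_rdropWhile_eq_of_length_eq {l₁ l₂ : List α} {a : α}
    (hlen : l₁.length = l₂.length) (h : l₁.rdropWhile (· == a) = l₂.rdropWhile (· == a)) :
    l₁ = l₂ := by
  rw [← rdropWhile_append_replicate_eq l₁ a, ← rdropWhile_append_replicate_eq l₂ a, h, hlen]

end List

def shiftRow (A : Finset ℕ) : Finset ℕ := A.image (· + 1) ∪ {0}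

lemma shiftS_iterate (Λ : Finset ℕ × Finset ℕ) (k : ℕ) :
    shiftS^[k] Λ = (shiftRow^[k] Λ.1, shiftRow^[k] Λ.2) := by
  change (Prod.map shiftRow shiftRow)^[k] Λ = _
  rw [Prod.map_iterate]
  rfl

lemma card_shiftRow (A : Finset ℕ) : (shiftRow A).card = A.card + 1 := by
  rw [shiftRow, Finset.card_union_of_disjoint (by simp), Finset.card_singleton,
    Finset.card_image_of_injective _ (add_left_injective 1)]

lemma sort_shiftRow (A : Finset ℕ) :
    (shiftRow A).sort (· ≤ ·) = 0 :: (A.sort (· ≤ ·)).map (· + 1) := by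
  have hmono : StrictMonoOn (addRightEmbedding 1) (A : Set ℕ) := fun _ _ _ _ h => by simpa using h
  have himage : A.image (· + 1) = A.map (addRightEmbedding 1) := by
    rw [Finset.map_eq_image]; rfl
  rw [shiftRow, Finset.union_singleton, Finset.sort_insert _ (by simp) (by simp), himage,
    ← hmono.map_finsetSort]
  rfl

lemma upsRowFull_eq_mapIdx (A : Finset ℕ) :
    upsRowFull A = ((A.sort (· ≤ ·)).reverse.map ((↑) : ℕ → ℤ)).mapIdx
      fun i a => a - ((A.card : ℤ) - 1 - i) := by
  -- the coercion `List ℕ → List ℤ` in `upsRowFull` elaborates to a list-monad bind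
  rw [upsRowFull, List.map_eq_flatMap]
  rfl

lemma length_upsRowFull (A : Finset ℕ) : (upsRowFull A).length = A.card := by
  simp [upsRowFull_eq_mapIdx]

lemma upsRowFull_shiftRow (A : Finset ℕ) : upsRowFull (shiftRow A) = upsRowFull A ++ [0] := by
  rw [upsRowFull_eq_mapIdx, upsRowFull_eq_mapIdx, sort_shiftRow, card_shiftRow, List.reverse_cons,
    List.map_append, List.mapIdx_append]
  congr 1
  · apply List.ext_getElem (by simp)
    intro i _ _
    simp only [List.getElem_mapIdx, List.getElem_map, List.getElem_reverse, List.length_map]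
    push_cast
    ring
  · simp

lemma upsRowFull_iterate_shiftRow (A : Finset ℕ) (k : ℕ) :
    upsRowFull (shiftRow^[k] A) = upsRowFull A ++ List.replicate k 0 := by
  induction k with
  | zero => simp
  | succ k ih =>
    rw [Function.iterate_succ_apply', upsRowFull_shiftRow, ih, List.replicate_succ',
      List.append_assoc]

lemma upsRow_eq_rdropWhile (A : Finset ℕ) : upsRow A = (upsRowFull A).rdropWhile (· == 0) := rfl

lemma upsRow_iterate_shiftRow (A : Finset ℕ) (k : ℕ) : upsRow (shiftRow^[k] A) = upsRow A := by
  rw [upsRow_eq_rdropWhile, upsRowFull_iterate_shiftRow, List.rdropWhile_append_replicate]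
  rfl

lemma upsRowFull_injective : Function.Injective upsRowFull := by
  intro A B h
  have hcard : A.card = B.card := by
    rw [← length_upsRowFull, ← length_upsRowFull, h]
  have hsort : ((A.sort (· ≤ ·)).reverse.map ((↑) : ℕ → ℤ)) =
      ((B.sort (· ≤ ·)).reverse.map ((↑) : ℕ → ℤ)) := by
    have := congrArg (List.mapIdx fun i (x : ℤ) => x + ((A.card : ℤ) - 1 - i)) h
    simp only [upsRowFull_eq_mapIdx, List.mapIdx_mapIdx, Function.comp_def, sub_add_cancel,
      hcard] at this
    have hid (l : List ℤ) : l.mapIdx (fun _ x => x) = l := by simp [List.mapIdx_eq_iff]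
    rwa [hid, hid] at this
  rw [← Finset.sort_toFinset A (· ≤ ·), ← Finset.sort_toFinset B (· ≤ ·),
    ← List.reverse_inj.1 (List.map_injective_iff.2 Nat.cast_injective hsort)]

lemma iterate_shiftRow_eq_of_upsRow_eq {A B : Finset ℕ} {k : ℕ} (hk : A.card + k = B.card)
    (h : upsRow A = upsRow B) : shiftRow^[k] A = B := by
  refine upsRowFull_injective (List.eq_of_rdropWhile_eq_of_length_eq (a := 0) ?_ ?_)
  · simp [upsRowFull_iterate_shiftRow, length_upsRowFull, hk]
  · rw [← upsRow_eq_rdropWhile, ← upsRow_eq_rdropWhile, upsRow_iterate_shiftRow, h]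

lemma sdefect_shiftS (Λ : Finset ℕ × Finset ℕ) : sdefect (shiftS Λ) = sdefect Λ := by
  change ((shiftRow Λ.1).card : ℤ) - (shiftRow Λ.2).card = _
  rw [card_shiftRow, card_shiftRow, sdefect]
  push_cast
  ring

/-- Two symbols are equivalent under the shift-generated equivalence relation
if and only if they have the same bi-partition `Υ` and the same defect. -/
theorem sequiv_iff_ups_and_defect_eq (Λ₁ Λ₂ : Finset ℕ × Finset ℕ) :
    sequiv Λ₁ Λ₂ ↔
      upsRow Λ₁.1 = upsRow Λ₂.1 ∧ upsRow Λ₁.2 = upsRow Λ₂.2 ∧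
        sdefect Λ₁ = sdefect Λ₂ := by
  constructor
  · intro h
    have hinv := h.apply_eq (f := fun Λ => (upsRow Λ.1, upsRow Λ.2, sdefect Λ)) fun Λ _ hΛ => by
      subst hΛ
      simp only [Prod.mk.injEq, sdefect_shiftS, and_true]
      exact ⟨(upsRow_iterate_shiftRow Λ.1 1).symm, (upsRow_iterate_shiftRow Λ.2 1).symm⟩
    simpa using hinv
  · rintro ⟨h₁, h₂, hdef⟩
    wlog hle : Λ₁.1.card ≤ Λ₂.1.card generalizing Λ₁ Λ₂
    · exact (this Λ₂ Λ₁ h₁.symm h₂.symm hdef.symm (by omega)).symm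
    obtain ⟨k, hk⟩ := Nat.exists_eq_add_of_le hle
    have hk₂ : Λ₁.2.card + k = Λ₂.2.card := by
      unfold sdefect at hdef
      omega
    have hshift : shiftS^[k] Λ₁ = Λ₂ := by
      rw [shiftS_iterate, iterate_shiftRow_eq_of_upsRow_eq hk.symm h₁,
        iterate_shiftRow_eq_of_upsRow_eq hk₂ h₂]
    exact hshift ▸ Relation.eqvGen_self_iterate shiftS Λ₁ k
end

section
/- A symbol Λ is cuspidal if and only if δ(Λ) = 0, where δ(Λ) = δ(A) + δ(B) for Λ = (A, B). -/
lemma card_le_max_succ (A : Finset ℕ) (h : A.Nonempty) : A.card ≤ A.max' h + 1 := by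
  have hsub : A ⊆ Finset.range (A.max' h + 1) :=
    fun a ha => Finset.mem_range.2 (Nat.lt_succ_of_le (A.le_max' a ha))
  simpa using Finset.card_le_card hsub

lemma deltaRow_nonneg (A : Finset ℕ) : 0 ≤ deltaRow A := by
  unfold deltaRow
  split
  · rename_i h
    have := card_le_max_succ A h
    omega
  · simp

lemma two_mul_sum_ge (A : Finset ℕ) :
    (A.card : ℤ) * ((A.card : ℤ) - 1) ≤ 2 * ∑ a ∈ A, (a : ℤ) := by
  induction A using Finset.strongInduction with
  | _ A ih =>
    rcases A.eq_empty_or_nonempty with rfl | hA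
    · simp
    · have hm := A.max'_mem hA
      have h1 := card_le_max_succ A hA
      have hc : 1 ≤ A.card := hA.card_pos
      have ihe := ih (A.erase (A.max' hA)) (Finset.erase_ssubset hm)
      rw [Finset.card_erase_of_mem hm] at ihe
      have hcast : ((A.card - 1 : ℕ) : ℤ) = (A.card : ℤ) - 1 := by
        push_cast [Nat.cast_sub hc]; ring
      rw [hcast] at ihe
      have hmax : (A.card : ℤ) - 1 ≤ (A.max' hA : ℤ) := by omega
      have hsum : ∑ a ∈ A, (a : ℤ) = (A.max' hA : ℤ) + ∑ a ∈ A.erase (A.max' hA), (a : ℤ) :=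
        (Finset.add_sum_erase A _ hm).symm
      nlinarith [ihe, hmax]

lemma two_mul_sum_ge' (A : Finset ℕ) :
    (A.card : ℤ) * ((A.card : ℤ) - 1) + 2 * deltaRow A ≤ 2 * ∑ a ∈ A, (a : ℤ) := by
  rcases A.eq_empty_or_nonempty with rfl | hA
  · simp [deltaRow]
  · have hm := A.max'_mem hA
    have hc : 1 ≤ A.card := hA.card_pos
    have hb := two_mul_sum_ge (A.erase (A.max' hA))
    rw [Finset.card_erase_of_mem hm] at hb
    have hcast : ((A.card - 1 : ℕ) : ℤ) = (A.card : ℤ) - 1 := by omega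
    rw [hcast] at hb
    have hsum : ∑ a ∈ A, (a : ℤ) = (A.max' hA : ℤ) + ∑ a ∈ A.erase (A.max' hA), (a : ℤ) :=
      (Finset.add_sum_erase A _ hm).symm
    have hd : deltaRow A = (A.max' hA : ℤ) - ((A.card : ℤ) - 1) := by
      unfold deltaRow; rw [dif_pos hA]
    rw [hd, hsum]
    nlinarith [hb]

lemma sum_of_delta_zero (A : Finset ℕ) (h : deltaRow A = 0) :
    2 * ∑ a ∈ A, (a : ℤ) = (A.card : ℤ) * ((A.card : ℤ) - 1) := by
  rcases A.eq_empty_or_nonempty with rfl | hA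
  · simp
  · have hc : 1 ≤ A.card := hA.card_pos
    unfold deltaRow at h
    rw [dif_pos hA] at h
    have hmax : A.max' hA = A.card - 1 := by omega
    have hsub : A ⊆ Finset.range A.card := by
      intro a ha
      have := A.le_max' a ha
      rw [hmax] at this
      exact Finset.mem_range.2 (by omega)
    have hAeq : A = Finset.range A.card :=
      Finset.eq_of_subset_of_card_le hsub (by simp)
    have hg := Finset.sum_range_id_mul_two A.card
    have hsc : ∑ a ∈ A, (a : ℤ) = ((∑ i ∈ Finset.range A.card, i : ℕ) : ℤ) := by
      rw [Nat.cast_sum, hAeq]; simp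
    rw [hsc]
    have hg' : ((∑ i ∈ Finset.range A.card, i : ℕ) : ℤ) * 2 = ((A.card * (A.card - 1) : ℕ) : ℤ) := by
      exact_mod_cast congrArg (Nat.cast : ℕ → ℤ) hg
    have hcast : ((A.card * (A.card - 1) : ℕ) : ℤ) = (A.card : ℤ) * ((A.card : ℤ) - 1) := by
      push_cast [Nat.cast_sub hc]; ring
    linarith [hg', hcast.symm ▸ hg']

lemma divsum (m n : ℤ) :
    (m - n) ^ 2 / 4 + (m + n - 1) ^ 2 / 4 = (m * (m - 1) + n * (n - 1)) / 2 := by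
  rcases Int.even_or_odd (m - n) with ⟨k, hk⟩ | ⟨k, hk⟩
  · have hm : m = n + (k + k) := by omega
    subst hm
    have h1 : (n + (k + k) - n) ^ 2 = k ^ 2 * 4 := by ring
    have h2 : (n + (k + k) + n - 1) ^ 2 = 1 + ((n + k) * (n + k - 1)) * 4 := by ring
    have h3 : (n + (k + k)) * (n + (k + k) - 1) + n * (n - 1) =
        (n ^ 2 + 2 * k ^ 2 + 2 * n * k - n - k) * 2 := by ring
    rw [h1, h2, h3, Int.mul_ediv_cancel _ (by norm_num),
      Int.add_mul_ediv_right _ _ (by norm_num : (4:ℤ) ≠ 0),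
      Int.mul_ediv_cancel _ (by norm_num)]
    norm_num; ring
  · have hm : m = n + (2 * k + 1) := by omega
    subst hm
    have h1 : (n + (2 * k + 1) - n) ^ 2 = 1 + (k * (k + 1)) * 4 := by ring
    have h2 : (n + (2 * k + 1) + n - 1) ^ 2 = (n + k) ^ 2 * 4 := by ring
    have h3 : (n + (2 * k + 1)) * (n + (2 * k + 1) - 1) + n * (n - 1) =
        (k * (k + 1) + (n + k) ^ 2) * 2 := by ring
    rw [h1, h2, h3, Int.add_mul_ediv_right _ _ (by norm_num : (4:ℤ) ≠ 0),
      Int.mul_ediv_cancel _ (by norm_num), Int.mul_ediv_cancel _ (by norm_num)]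
    norm_num

/-- A symbol `Λ` is cuspidal if and only if `δ(Λ) = 0`. -/
theorem cuspidal_iff_delta_eq_zero (Λ : Finset ℕ × Finset ℕ) :
    srank Λ = (sdefect Λ) ^ 2 / 4 ↔ deltaS Λ = 0 := by
  obtain ⟨A, B⟩ := Λ
  simp only [srank, sdefect, deltaS]
  have hdiv := divsum (A.card : ℤ) (B.card : ℤ)
  have h2A := two_mul_sum_ge' A
  have h2B := two_mul_sum_ge' B
  have h0A := deltaRow_nonneg A
  have h0B := deltaRow_nonneg B
  obtain ⟨e, he⟩ : Even ((A.card:ℤ) * ((A.card:ℤ)-1) + (B.card:ℤ)*((B.card:ℤ)-1)) := by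
    have ha := Int.even_mul_succ_self ((A.card:ℤ)-1)
    have hb := Int.even_mul_succ_self ((B.card:ℤ)-1)
    rw [show ((A.card:ℤ)-1)*(((A.card:ℤ)-1)+1) = (A.card:ℤ)*((A.card:ℤ)-1) by ring] at ha
    rw [show ((B.card:ℤ)-1)*(((B.card:ℤ)-1)+1) = (B.card:ℤ)*((B.card:ℤ)-1) by ring] at hb
    exact ha.add hb
  rw [he] at hdiv
  rw [show (e + e) / 2 = e by omega] at hdiv
  constructor
  · intro h
    linarith [h, hdiv, he, h2A, h2B, h0A, h0B]
  · intro h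
    have hA0 : deltaRow A = 0 := by linarith
    have hB0 : deltaRow B = 0 := by linarith
    have sA := sum_of_delta_zero A hA0
    have sB := sum_of_delta_zero B hB0
    linarith [sA, sB, he, hdiv]
end

section
/- Let Λ be a symbol with rk(Λ) = n and δ(Λ) = n. Then def(Λ) ∈ {−1, 0, 1}, and Λ is equivalent (under the shift equivalence) to ({k}, {n−k+1, 0}) if def(Λ) = −1, to ({n−k}, {k}) if def(Λ) = 0, or to ({n−k+1, 0}, {k}) if def(Λ) = 1, for some 0 ≤ k ≤ n. -/


lemma sqdiv_even (x : ℤ) : (2*x)^2/4 = x^2 := by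
  rw [show (2*x)^2 = x^2*4 by ring]; omega

lemma sqdiv_odd (x : ℤ) : (2*x+1)^2/4 = x^2+x := by
  rw [show (2*x+1)^2 = (x^2+x)*4+1 by ring]; omega

lemma gaussZ (c : ℕ) : 2 * ((∑ i ∈ Finset.range c, i : ℕ) : ℤ) = (c:ℤ) * ((c:ℤ) - 1) := by
  induction c with
  | zero => simp
  | succ k ih => rw [Finset.sum_range_succ]; push_cast at ih ⊢; ring_nf; ring_nf at ih; linarith

lemma sum_range_card_le' (c : ℕ) : ∀ S : Finset ℕ, S.card = c →
    ∑ i ∈ Finset.range c, i ≤ ∑ x ∈ S, x := by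
  induction c with
  | zero => simp
  | succ k ih =>
    intro S hn
    have hne : S.Nonempty := Finset.card_pos.mp (by omega)
    have hMem : S.max' hne ∈ S := S.max'_mem hne
    have hcard : (S.erase (S.max' hne)).card = k := by
      rw [Finset.card_erase_of_mem hMem, hn]; omega
    have hle : k ≤ S.max' hne := by
      have hsub : S ⊆ Finset.range (S.max' hne + 1) := fun x hx =>
        Finset.mem_range.mpr (Nat.lt_succ_of_le (S.le_max' x hx))
      have := Finset.card_le_card hsub
      rw [Finset.card_range] at this; omega
    have h2 := ih (S.erase (S.max' hne)) hcard
    have hsum : S.max' hne + ∑ x ∈ S.erase (S.max' hne), x = ∑ x ∈ S, x :=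
      Finset.add_sum_erase S (fun x => x) hMem
    rw [Finset.sum_range_succ]
    omega

lemma sum_range_card_le (S : Finset ℕ) : ∑ i ∈ Finset.range S.card, i ≤ ∑ x ∈ S, x :=
  sum_range_card_le' S.card S rfl

lemma eq_range_of_sum_eq' (c : ℕ) : ∀ S : Finset ℕ, S.card = c →
    (∑ x ∈ S, x = ∑ i ∈ Finset.range c, i) → S = Finset.range c := by
  induction c with
  | zero => intro S hn _; simp [Finset.card_eq_zero.mp hn]
  | succ k ih =>
    intro S hn h
    have hne : S.Nonempty := Finset.card_pos.mp (by omega)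
    have hMem : S.max' hne ∈ S := S.max'_mem hne
    have hcard : (S.erase (S.max' hne)).card = k := by
      rw [Finset.card_erase_of_mem hMem, hn]; omega
    have hle : k ≤ S.max' hne := by
      have hsub : S ⊆ Finset.range (S.max' hne + 1) := fun x hx =>
        Finset.mem_range.mpr (Nat.lt_succ_of_le (S.le_max' x hx))
      have := Finset.card_le_card hsub
      rw [Finset.card_range] at this; omega
    have h2 := sum_range_card_le' k (S.erase (S.max' hne)) hcard
    have hsum : S.max' hne + ∑ x ∈ S.erase (S.max' hne), x = ∑ x ∈ S, x :=
      Finset.add_sum_erase S (fun x => x) hMem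
    rw [Finset.sum_range_succ] at h
    have hMeq : S.max' hne = k := by omega
    have heq : ∑ x ∈ S.erase (S.max' hne), x = ∑ i ∈ Finset.range k, i := by omega
    have hrec := ih (S.erase (S.max' hne)) hcard heq
    have : S = insert (S.max' hne) (S.erase (S.max' hne)) := (Finset.insert_erase hMem).symm
    rw [this, hrec, hMeq, Finset.range_add_one]

lemma eq_range_of_sum_eq (S : Finset ℕ)
    (h : ∑ x ∈ S, x = ∑ i ∈ Finset.range S.card, i) : S = Finset.range S.card :=
  eq_range_of_sum_eq' S.card S rfl h






lemma shift_row (m r : ℕ) :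
    (insert m (Finset.range r)).image (· + 1) ∪ {0}
      = insert (m + 1) (Finset.range (r + 1)) := by
  ext x
  simp only [Finset.mem_union, Finset.mem_image, Finset.mem_insert, Finset.mem_range,
    Finset.mem_singleton]
  constructor
  · rintro (⟨y, hy | hy, rfl⟩ | rfl) <;> omega
  · intro h
    rcases h with h | h
    · exact Or.inl ⟨m, Or.inl rfl, h.symm⟩
    · rcases Nat.eq_zero_or_pos x with rfl | hx
      · exact Or.inr rfl
      · exact Or.inl ⟨x - 1, Or.inr (by omega), by omega⟩

lemma sequiv_model0 (a b j : ℕ) :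
    sequiv ({a}, {b}) (insert (a+j) (Finset.range j), insert (b+j) (Finset.range j)) := by
  induction j with
  | zero =>
    have : ((insert (a+0) (Finset.range 0), insert (b+0) (Finset.range 0)) : Finset ℕ × Finset ℕ)
        = ({a}, {b}) := by simp
    rw [this]; exact Relation.EqvGen.refl _
  | succ j ih =>
    refine Relation.EqvGen.trans _ _ _ ih (Relation.EqvGen.rel _ _ ?_)
    simp only [shiftS, Prod.mk.injEq]
    exact ⟨(shift_row (a+j) j).symm, (shift_row (b+j) j).symm⟩

lemma sequiv_model_neg (a b j : ℕ) :
    sequiv ({a}, insert b {0})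
      (insert (a+j) (Finset.range j), insert (b+j) (Finset.range (j+1))) := by
  induction j with
  | zero =>
    have : ((insert (a+0) (Finset.range 0), insert (b+0) (Finset.range 1)) : Finset ℕ × Finset ℕ)
        = ({a}, insert b {0}) := by simp [Finset.range_one]
    rw [this]; exact Relation.EqvGen.refl _
  | succ j ih =>
    refine Relation.EqvGen.trans _ _ _ ih (Relation.EqvGen.rel _ _ ?_)
    simp only [shiftS, Prod.mk.injEq]
    exact ⟨(shift_row (a+j) j).symm, (shift_row (b+j) (j+1)).symm⟩

lemma sequiv_model_pos (a b j : ℕ) :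
    sequiv (insert a {0}, {b})
      (insert (a+j) (Finset.range (j+1)), insert (b+j) (Finset.range j)) := by
  induction j with
  | zero =>
    have : ((insert (a+0) (Finset.range 1), insert (b+0) (Finset.range 0)) : Finset ℕ × Finset ℕ)
        = (insert a {0}, {b}) := by simp [Finset.range_one]
    rw [this]; exact Relation.EqvGen.refl _
  | succ j ih =>
    refine Relation.EqvGen.trans _ _ _ ih (Relation.EqvGen.rel _ _ ?_)
    simp only [shiftS, Prod.mk.injEq]
    exact ⟨(shift_row (a+j) (j+1)).symm, (shift_row (b+j) j).symm⟩

lemma row_facts (A : Finset ℕ) (hA : A.Nonempty) :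
    ∃ sa qa : ℕ,
      (∑ x ∈ A, x) = A.max' hA + sa ∧
      qa = ∑ i ∈ Finset.range (A.card - 1), i ∧
      qa ≤ sa ∧
      A.card - 1 ≤ A.max' hA ∧ 1 ≤ A.card ∧
      2*(qa:ℤ) = ((A.card:ℤ) - 1) * ((A.card:ℤ) - 2) ∧
      (sa = qa → A = insert ((A.max' hA - (A.card - 1)) + (A.card - 1))
        (Finset.range (A.card - 1))) := by
  have hMem : A.max' hA ∈ A := A.max'_mem hA
  have hcard : (A.erase (A.max' hA)).card = A.card - 1 :=
    Finset.card_erase_of_mem hMem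
  have hm1 : 1 ≤ A.card := hA.card_pos
  have hMage : A.card - 1 ≤ A.max' hA := by
    have hsub : A ⊆ Finset.range (A.max' hA + 1) := fun x hx =>
      Finset.mem_range.mpr (Nat.lt_succ_of_le (A.le_max' x hx))
    have := Finset.card_le_card hsub
    rw [Finset.card_range] at this; omega
  refine ⟨∑ x ∈ A.erase (A.max' hA), x, ∑ i ∈ Finset.range (A.card - 1), i,
    (Finset.add_sum_erase A (fun x => x) hMem).symm, rfl, ?_, hMage, hm1, ?_, ?_⟩
  · have := sum_range_card_le (A.erase (A.max' hA))
    rw [hcard] at this; exact this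
  · have h := gaussZ (A.card - 1)
    rw [Nat.cast_sub hm1] at h
    push_cast at h ⊢
    linear_combination h
  · intro h
    have hT : A.erase (A.max' hA) = Finset.range (A.card - 1) := by
      have := eq_range_of_sum_eq (A.erase (A.max' hA)) (by rw [hcard]; exact h)
      rw [hcard] at this; exact this
    rw [show A.max' hA - (A.card - 1) + (A.card - 1) = A.max' hA from by omega, ← hT]
    exact (Finset.insert_erase hMem).symm


set_option maxHeartbeats 4000000 in
/-- If `rk(Λ) = n` and `δ(Λ) = n`, then `def(Λ) ∈ {−1, 0, 1}` and `Λ` is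
shift-equivalent to `({k}, {n−k+1, 0})`, `({n−k}, {k})` or `({n−k+1, 0}, {k})`
according to the defect, for some `0 ≤ k ≤ n`. -/
theorem delta_eq_rank_classification (Λ : Finset ℕ × Finset ℕ) (n : ℕ)
    (hrk : srank Λ = n) (hδ : deltaS Λ = n) :
    (sdefect Λ = -1 ∨ sdefect Λ = 0 ∨ sdefect Λ = 1) ∧
      ∃ k ≤ n,
        (sdefect Λ = -1 ∧ sequiv Λ ({k}, {n - k + 1, 0})) ∨
        (sdefect Λ = 0 ∧ sequiv Λ ({n - k}, {k})) ∨
        (sdefect Λ = 1 ∧ sequiv Λ ({n - k + 1, 0}, {k})) := by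
  obtain ⟨A, B⟩ := Λ
  simp only [srank] at hrk
  simp only [deltaS, deltaRow] at hδ
  rcases A.eq_empty_or_nonempty with rfl | hA
  · rcases B.eq_empty_or_nonempty with rfl | hB
    · -- both rows empty
      norm_num at hrk hδ
      have hn : n = 0 := by omega
      subst hn
      refine ⟨Or.inr (Or.inl (by simp [sdefect])), 0, le_refl 0,
        Or.inr (Or.inl ⟨by simp [sdefect], ?_⟩)⟩
      exact Relation.EqvGen.rel _ _ (by simp [shiftS])
    · -- A = ∅, B nonempty
      obtain ⟨sb, qb, hsumB, hqb, hqble, hMbge, hs1, hgb, hstructB⟩ := row_facts B hB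
      rw [dif_neg Finset.not_nonempty_empty, dif_pos hB] at hδ
      have hBZ := congrArg (fun t : ℕ => (t:ℤ)) hsumB
      push_cast at hBZ
      simp only [Finset.sum_empty, Finset.card_empty, Nat.cast_zero, zero_add] at hrk
      rw [hBZ] at hrk
      have hqbZ : (qb:ℤ) ≤ sb := by exact_mod_cast hqble
      have hs1Z : (1:ℤ) ≤ (B.card:ℤ) := by exact_mod_cast hs1
      rcases Int.even_or_odd ((B.card:ℤ) - 1) with ⟨v, hv⟩ | ⟨v, hv⟩
      · have hsZ : (B.card:ℤ) = 2*v+1 := by omega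
        rw [show ((B.card:ℤ) - 1) = 2*v from by omega, sqdiv_even] at hrk
        rw [hsZ] at hδ hgb
        have E : 2*((sb:ℤ) - qb) + 2*(v^2+v) = 0 := by
          linear_combination 2*hrk - 2*hδ - hgb
        have hv0 : v = 0 := by
          have hvge : 0 ≤ v := by omega
          nlinarith [sq_nonneg v]
        subst hv0
        have hcard1 : B.card = 1 := by omega
        obtain ⟨b, rfl⟩ := Finset.card_eq_one.mp hcard1
        rw [Finset.max'_singleton] at hδ
        have hnb : n = b := by omega
        refine ⟨Or.inl (by simp [sdefect]), 0, Nat.zero_le n,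
          Or.inl ⟨by simp [sdefect], ?_⟩⟩
        rw [show n - 0 + 1 = b + 1 from by omega]
        exact Relation.EqvGen.rel _ _ (by
          have h1 : ({0} : Finset ℕ) = (∅ : Finset ℕ).image (· + 1) ∪ {0} := by simp
          have h2 : ({b+1, 0} : Finset ℕ) = ({b} : Finset ℕ).image (· + 1) ∪ {0} := by
            ext x; simp
          simp only [shiftS]; rw [← h1, ← h2])
      · have hsZ : (B.card:ℤ) = 2*v+2 := by omega
        rw [show ((B.card:ℤ) - 1) = 2*v+1 from by omega, sqdiv_odd] at hrk
        rw [hsZ] at hδ hgb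
        have E : 2*((sb:ℤ) - qb) + 2*(v+1)^2 = 0 := by
          linear_combination 2*hrk - 2*hδ - hgb
        have hvge : 0 ≤ v := by omega
        exfalso; nlinarith [sq_nonneg v]
  · rcases B.eq_empty_or_nonempty with rfl | hB
    · -- B = ∅, A nonempty
      obtain ⟨sa, qa, hsumA, hqa, hqale, hMage, hm1, hga, hstructA⟩ := row_facts A hA
      rw [dif_pos hA, dif_neg Finset.not_nonempty_empty] at hδ
      have hAZ := congrArg (fun t : ℕ => (t:ℤ)) hsumA
      push_cast at hAZ
      simp only [Finset.sum_empty, Finset.card_empty, Nat.cast_zero, add_zero] at hrk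
      rw [hAZ] at hrk
      have hqaZ : (qa:ℤ) ≤ sa := by exact_mod_cast hqale
      have hm1Z : (1:ℤ) ≤ (A.card:ℤ) := by exact_mod_cast hm1
      rcases Int.even_or_odd ((A.card:ℤ) - 1) with ⟨v, hv⟩ | ⟨v, hv⟩
      · have hsZ : (A.card:ℤ) = 2*v+1 := by omega
        rw [show ((A.card:ℤ) - 1) = 2*v from by omega, sqdiv_even] at hrk
        rw [hsZ] at hδ hga
        have E : 2*((sa:ℤ) - qa) + 2*(v^2+v) = 0 := by
          linear_combination 2*hrk - 2*hδ - hga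
        have hv0 : v = 0 := by
          have hvge : 0 ≤ v := by omega
          nlinarith [sq_nonneg v]
        subst hv0
        have hcard1 : A.card = 1 := by omega
        obtain ⟨a, rfl⟩ := Finset.card_eq_one.mp hcard1
        rw [Finset.max'_singleton] at hδ
        have hna : n = a := by omega
        refine ⟨Or.inr (Or.inr (by simp [sdefect])), 0, Nat.zero_le n,
          Or.inr (Or.inr ⟨by simp [sdefect], ?_⟩)⟩
        rw [show n - 0 + 1 = a + 1 from by omega]
        exact Relation.EqvGen.rel _ _ (by
          have h1 : ({0} : Finset ℕ) = (∅ : Finset ℕ).image (· + 1) ∪ {0} := by simp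
          have h2 : ({a+1, 0} : Finset ℕ) = ({a} : Finset ℕ).image (· + 1) ∪ {0} := by
            ext x; simp
          simp only [shiftS]; rw [← h1, ← h2])
      · have hsZ : (A.card:ℤ) = 2*v+2 := by omega
        rw [show ((A.card:ℤ) - 1) = 2*v+1 from by omega, sqdiv_odd] at hrk
        rw [hsZ] at hδ hga
        have E : 2*((sa:ℤ) - qa) + 2*(v+1)^2 = 0 := by
          linear_combination 2*hrk - 2*hδ - hga
        have hvge : 0 ≤ v := by omega
        exfalso; nlinarith [sq_nonneg v]
    · -- both nonempty
      obtain ⟨sa, qa, hsumA, hqa, hqale, hMage, hm1, hga, hstructA⟩ := row_facts A hA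
      obtain ⟨sb, qb, hsumB, hqb, hqble, hMbge, hs1, hgb, hstructB⟩ := row_facts B hB
      rw [dif_pos hA, dif_pos hB] at hδ
      have hAZ := congrArg (fun t : ℕ => (t:ℤ)) hsumA
      have hBZ := congrArg (fun t : ℕ => (t:ℤ)) hsumB
      push_cast at hAZ hBZ
      rw [hAZ, hBZ] at hrk
      have hqaZ : (qa:ℤ) ≤ sa := by exact_mod_cast hqale
      have hqbZ : (qb:ℤ) ≤ sb := by exact_mod_cast hqble
      have hm1Z : (1:ℤ) ≤ (A.card:ℤ) := by exact_mod_cast hm1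
      have hs1Z : (1:ℤ) ≤ (B.card:ℤ) := by exact_mod_cast hs1
      obtain ⟨α, hα⟩ : ∃ α, A.max' hA = α + (A.card - 1) := ⟨A.max' hA - (A.card - 1), by omega⟩
      obtain ⟨β, hβ⟩ : ∃ β, B.max' hB = β + (B.card - 1) := ⟨B.max' hB - (B.card - 1), by omega⟩
      rcases Int.even_or_odd ((A.card:ℤ) - (B.card:ℤ)) with ⟨v, hv⟩ | ⟨v, hv⟩
      · -- defect 0
        have hmZ : (A.card:ℤ) = (B.card:ℤ) + 2*v := by omega
        rw [show ((A.card:ℤ) + (B.card:ℤ) - 1) = 2*((B.card:ℤ) + v - 1) + 1 from by omega,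
          sqdiv_odd] at hrk
        rw [hmZ] at hδ hga
        have E : 2*((sa:ℤ) - qa) + 2*((sb:ℤ) - qb) + 2*v^2 = 0 := by
          linear_combination 2*hrk - 2*hδ - hga - hgb
        have hv2 : v^2 = 0 := by linarith [sq_nonneg v]
        have hv0 : v = 0 := by
          have := sq_eq_zero_iff.mp hv2
          exact this
        subst hv0
        norm_num at E hmZ
        have hsa : sa = qa := by omega
        have hsb : sb = qb := by omega
        have hcards : A.card = B.card := by omega
        have hAeq := hstructA hsa
        have hBeq := hstructB hsb
        rw [show A.max' hA - (A.card - 1) = α from by omega] at hAeq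
        rw [show B.max' hB - (B.card - 1) = β from by omega] at hBeq
        rw [← hcards] at hBeq
        have hn : n = α + β := by omega
        refine ⟨Or.inr (Or.inl (by simp only [sdefect]; omega)), β, by omega,
          Or.inr (Or.inl ⟨by simp only [sdefect]; omega, ?_⟩)⟩
        rw [show n - β = α from by omega, hAeq, hBeq]
        exact Relation.EqvGen.symm _ _ (sequiv_model0 α β (A.card - 1))
      · -- defect ±1
        have hmZ : (A.card:ℤ) = (B.card:ℤ) + 2*v + 1 := by omega
        rw [show ((A.card:ℤ) + (B.card:ℤ) - 1) = 2*((B.card:ℤ) + v) from by omega,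
          sqdiv_even] at hrk
        rw [hmZ] at hδ hga
        have E : 2*((sa:ℤ) - qa) + 2*((sb:ℤ) - qb) + 2*(v^2+v) = 0 := by
          linear_combination 2*hrk - 2*hδ - hga - hgb
        have hvv : 0 ≤ v^2 + v := by
          have h1 : v^2 + v = v*(v+1) := by ring
          rw [h1]
          rcases le_or_gt 0 v with h | h
          · exact mul_nonneg h (by linarith)
          · have h2 : -v * -(v+1) = v*(v+1) := by ring
            rw [← h2]
            exact mul_nonneg (by linarith) (by linarith)
        have hvv0 : v^2 + v = 0 := by linarith
        have hsa : sa = qa := by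
          have : ((sa:ℤ) - qa) + ((sb:ℤ) - qb) = 0 := by linarith
          omega
        have hsb : sb = qb := by
          have : ((sa:ℤ) - qa) + ((sb:ℤ) - qb) = 0 := by linarith
          omega
        have hAeq := hstructA hsa
        have hBeq := hstructB hsb
        rw [show A.max' hA - (A.card - 1) = α from by omega] at hAeq
        rw [show B.max' hB - (B.card - 1) = β from by omega] at hBeq
        have hvcase : v = 0 ∨ v = -1 := by
          have h5 : v * (v + 1) = 0 := by linear_combination hvv0
          rcases mul_eq_zero.mp h5 with h | h
          · exact Or.inl h
          · right; omega
        have hn : n = α + β := by omega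
        rcases hvcase with hv0 | hv0
        · -- defect 1
          subst hv0
          have hcards : A.card = B.card + 1 := by omega
          obtain ⟨j, hj⟩ : ∃ j, B.card - 1 = j := ⟨_, rfl⟩
          rw [hj] at hBeq
          rw [show A.card - 1 = j + 1 from by omega,
            show α + (j + 1) = (α + 1) + j from by omega] at hAeq
          refine ⟨Or.inr (Or.inr (by simp only [sdefect]; omega)), β, by omega,
            Or.inr (Or.inr ⟨by simp only [sdefect]; omega, ?_⟩)⟩
          rw [show n - β + 1 = α + 1 from by omega, hAeq, hBeq]
          exact Relation.EqvGen.symm _ _ (sequiv_model_pos (α+1) β j)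
        · -- defect -1
          subst hv0
          have hcards : B.card = A.card + 1 := by omega
          obtain ⟨i, hi⟩ : ∃ i, A.card - 1 = i := ⟨_, rfl⟩
          rw [hi] at hAeq
          rw [show B.card - 1 = i + 1 from by omega,
            show β + (i + 1) = (β + 1) + i from by omega] at hBeq
          refine ⟨Or.inl (by simp only [sdefect]; omega), α, by omega,
            Or.inl ⟨by simp only [sdefect]; omega, ?_⟩⟩
          rw [show n - α + 1 = β + 1 from by omega, hAeq, hBeq]
          exact Relation.EqvGen.symm _ _ (sequiv_model_neg α (β+1) i)
end
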